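/- For every convex lattice polygon Γ ⊂ ℝ², the number of primitive integral directions, counted up to sign, achieving the minimal lattice width of Γ is at most 4. -/

import Mathlib

noncomputable section

/-- `p` is a lattice point of `ℤ² ⊂ ℝ²`. -/
def IsLat (p : ℝ × ℝ) : Prop := (∃ m : ℤ, p.1 = m) ∧ (∃ n : ℤ, p.2 = n)

/-- evaluation of the integral linear functional `h` at a point `p`. -/
def ev (h : ℤ × ℤ) (p : ℝ × ℝ) : ℝ := (h.1 : ℝ) * p.1 + (h.2 : ℝ) * p.2

/-- the maximum of `h` on `Γ`. -/
def maxW (Γ : Set (ℝ × ℝ)) (h : ℤ × ℤ) : ℝ := sSup (ev h '' Γ)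

/-- the minimum of `h` on `Γ`. -/
def minW (Γ : Set (ℝ × ℝ)) (h : ℤ × ℤ) : ℝ := sInf (ev h '' Γ)

/-- the width of `Γ` in direction `h`. -/
def width (Γ : Set (ℝ × ℝ)) (h : ℤ × ℤ) : ℝ := maxW Γ h - minW Γ h

/-- the adjoint polygon: convex hull of the interior lattice points of `Γ`. -/
def adjoint (Γ : Set (ℝ × ℝ)) : Set (ℝ × ℝ) :=
  convexHull ℝ {p | p ∈ interior Γ ∧ IsLat p}

/-- `h` is tight for `Γ` (max-tight and min-tight with respect to the adjoint). -/
def Tight (Γ : Set (ℝ × ℝ)) (h : ℤ × ℤ) : Prop :=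
  maxW Γ h = maxW (adjoint Γ) h + 1 ∧ minW Γ h = minW (adjoint Γ) h - 1

/-- the lattice width of `Γ`: minimal width over nonzero integral directions. -/
def latticeWidth (Γ : Set (ℝ × ℝ)) : ℝ := sInf (width Γ '' {h : ℤ × ℤ | h ≠ 0})

/-- a primitive integral direction. -/
def IsPrimitive (h : ℤ × ℤ) : Prop := Int.gcd h.1 h.2 = 1

/-- the set of optimal (minimal width) nonzero directions of `Γ`. -/
def optimalSet (Γ : Set (ℝ × ℝ)) : Set (ℤ × ℤ) :=
  {h | h ≠ 0 ∧ width Γ h = latticeWidth Γ}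

/-!
Let `w` be the lattice width. If `w > 0`, two distinct optimal directions `a`, `b` are never
congruent mod 3: otherwise `a - b = 3 z` with `z ≠ 0`, and
`3 w ≤ width (3 z) = width (a - b) ≤ width a + width b = 2 w`. A primitive direction is nonzero
mod 3, and the eight nonzero vectors of `(ℤ/3)²` form four pairs `±c`, so up to sign there are at
most four optimal primitive directions. If `w = 0`, every optimal direction is orthogonal to the
difference of two distinct lattice points of the polygon, and only one primitive direction up to
sign is.
-/

lemma continuous_ev (h : ℤ × ℤ) : Continuous (ev h) := by
  unfold ev; fun_prop

lemma ev_add (a b : ℤ × ℤ) (p : ℝ × ℝ) : ev (a + b) p = ev a p + ev b p := by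
  simp only [ev, Prod.fst_add, Prod.snd_add, Int.cast_add]; ring

lemma ev_neg (a : ℤ × ℤ) (p : ℝ × ℝ) : ev (-a) p = -ev a p := by
  simp only [ev, Prod.fst_neg, Prod.snd_neg, Int.cast_neg]; ring

lemma ev_nsmul (n : ℕ) (a : ℤ × ℤ) (p : ℝ × ℝ) : ev (n • a) p = n * ev a p := by
  rw [ev, ev, Prod.smul_fst, Prod.smul_snd, nsmul_eq_mul, nsmul_eq_mul]; push_cast; ring

def modThree : ℤ × ℤ →+ ZMod 3 × ZMod 3 :=
  (Int.castAddHom (ZMod 3)).prodMap (Int.castAddHom (ZMod 3))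

lemma modThree_apply (h : ℤ × ℤ) : modThree h = ((h.1 : ZMod 3), (h.2 : ZMod 3)) := rfl

lemma exists_eq_three_smul_of_modThree_eq_zero {g : ℤ × ℤ} (hg : modThree g = 0) :
    ∃ z : ℤ × ℤ, g = 3 • z := by
  simp only [modThree_apply, Prod.mk_eq_zero, ZMod.intCast_zmod_eq_zero_iff_dvd,
    Nat.cast_ofNat] at hg
  obtain ⟨⟨k₁, hk₁⟩, ⟨k₂, hk₂⟩⟩ := hg
  exact ⟨(k₁, k₂), Prod.ext (by simp [hk₁]) (by simp [hk₂])⟩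

lemma IsPrimitive.modThree_ne_zero {h : ℤ × ℤ} (hh : IsPrimitive h) : modThree h ≠ 0 := by
  intro h0
  obtain ⟨z, rfl⟩ := exists_eq_three_smul_of_modThree_eq_zero h0
  have h3 : (3 : ℤ) ∣ Int.gcd (3 • z).1 (3 • z).2 :=
    Int.dvd_coe_gcd (by simp [nsmul_eq_mul]) (by simp [nsmul_eq_mul])
  rw [hh] at h3
  norm_num at h3

lemma exists_card_le_four_of_injOn_modThree {A : Set (ℤ × ℤ)} (hneg : ∀ h ∈ A, -h ∈ A)
    (hinj : Set.InjOn modThree A) :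
    ∃ T : Finset (ℤ × ℤ), T.card ≤ 4 ∧ ∀ h ∈ A, IsPrimitive h → h ∈ T ∨ -h ∈ T := by
  classical
  let C : Finset (ZMod 3 × ZMod 3) := {(1, 0), (0, 1), (1, 1), (1, 2)}
  have hC : ∀ c : ZMod 3 × ZMod 3, c ≠ 0 → c ∈ C ∨ -c ∈ C := by decide
  have hmem : ∀ g ∈ A, modThree g ∈ C → g ∈ C.image (Function.invFunOn modThree A) :=
    fun g hg hgC => Finset.mem_image.2 ⟨_, hgC, hinj.leftInvOn_invFunOn hg⟩
  refine ⟨C.image (Function.invFunOn modThree A), Finset.card_image_le.trans (by decide),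
    fun h hA hh => ?_⟩
  rcases hC _ hh.modThree_ne_zero with hc | hc
  · exact .inl (hmem h hA hc)
  · exact .inr (hmem (-h) (hneg h hA) (by rwa [map_neg]))

lemma IsPrimitive.eq_or_eq_neg_of_det_eq_zero {g h : ℤ × ℤ} (hg : IsPrimitive g)
    (hh : IsPrimitive h) (hdet : g.1 * h.2 = g.2 * h.1) : h = g ∨ h = -g := by
  obtain ⟨x, y, hxy⟩ := Int.isCoprime_iff_gcd_eq_one.mpr hg
  obtain ⟨x', y', hxy'⟩ := Int.isCoprime_iff_gcd_eq_one.mpr hh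
  -- `h = u • g` with `u = x h₁ + y h₂`, and `u` is a unit since `h` is primitive.
  set u := x * h.1 + y * h.2
  have h₁ : h.1 = u * g.1 := by linear_combination (-h.1) * hxy - y * hdet
  have h₂ : h.2 = u * g.2 := by linear_combination (-h.2) * hxy + x * hdet
  have hu : u * (x' * g.1 + y' * g.2) = 1 := by linear_combination hxy' - x' * h₁ - y' * h₂
  rcases Int.eq_one_or_neg_one_of_mul_eq_one hu with hu1 | hu1
  · exact .inl (Prod.ext (by simp [h₁, hu1]) (by simp [h₂, hu1]))
  · exact .inr (Prod.ext (by simp [h₁, hu1]) (by simp [h₂, hu1]))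

lemma IsPrimitive.eq_or_eq_neg_of_orthogonal {g h : ℤ × ℤ} (hg : IsPrimitive g)
    (hh : IsPrimitive h) {v : ℤ × ℤ} (hv : v ≠ 0) (hgv : g.1 * v.1 + g.2 * v.2 = 0)
    (hhv : h.1 * v.1 + h.2 * v.2 = 0) : h = g ∨ h = -g := by
  refine hg.eq_or_eq_neg_of_det_eq_zero hh (sub_eq_zero.1 ?_)
  by_cases hv₁ : v.1 = 0
  · have hv₂ : v.2 ≠ 0 := fun hv₂ => hv (Prod.ext hv₁ hv₂)
    exact (mul_eq_zero.1 (by linear_combination g.1 * hhv - h.1 * hgv)).resolve_right hv₂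
  · exact (mul_eq_zero.1 (by linear_combination h.2 * hgv - g.2 * hhv)).resolve_right hv₁

section Width

variable {K : Set (ℝ × ℝ)}

lemma ev_sub_le_width (hK : IsCompact K) (h : ℤ × ℤ) {p q : ℝ × ℝ} (hp : p ∈ K) (hq : q ∈ K) :
    ev h p - ev h q ≤ width K h :=
  have hc := hK.image (continuous_ev h)
  sub_le_sub (le_csSup hc.bddAbove (Set.mem_image_of_mem _ hp))
    (csInf_le hc.bddBelow (Set.mem_image_of_mem _ hq))

lemma exists_width_eq (hK : IsCompact K) (hKne : K.Nonempty) (h : ℤ × ℤ) :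
    ∃ p ∈ K, ∃ q ∈ K, width K h = ev h p - ev h q := by
  have hc := hK.image (continuous_ev h)
  obtain ⟨p, hp, hpe⟩ := hc.sSup_mem (hKne.image _)
  obtain ⟨q, hq, hqe⟩ := hc.sInf_mem (hKne.image _)
  exact ⟨p, hp, q, hq, by rw [width, maxW, minW, hpe, hqe]⟩

lemma width_nonneg (hK : IsCompact K) (hKne : K.Nonempty) (h : ℤ × ℤ) : 0 ≤ width K h := by
  obtain ⟨p, hp⟩ := hKne
  simpa using ev_sub_le_width hK h hp hp

lemma ev_eq_of_width_eq_zero (hK : IsCompact K) {h : ℤ × ℤ} (h0 : width K h = 0) {p q : ℝ × ℝ}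
    (hp : p ∈ K) (hq : q ∈ K) : ev h p = ev h q := by
  linarith [ev_sub_le_width hK h hp hq, ev_sub_le_width hK h hq hp]

lemma width_add_le (hK : IsCompact K) (hKne : K.Nonempty) (a b : ℤ × ℤ) :
    width K (a + b) ≤ width K a + width K b := by
  obtain ⟨p, hp, q, hq, he⟩ := exists_width_eq hK hKne (a + b)
  rw [he, ev_add, ev_add]
  linarith [ev_sub_le_width hK a hp hq, ev_sub_le_width hK b hp hq]

lemma width_neg_le (hK : IsCompact K) (hKne : K.Nonempty) (a : ℤ × ℤ) :
    width K (-a) ≤ width K a := by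
  obtain ⟨p, hp, q, hq, he⟩ := exists_width_eq hK hKne (-a)
  rw [he, ev_neg, ev_neg]
  linarith [ev_sub_le_width hK a hq hp]

lemma width_neg (hK : IsCompact K) (hKne : K.Nonempty) (a : ℤ × ℤ) :
    width K (-a) = width K a :=
  (width_neg_le hK hKne a).antisymm (by simpa using width_neg_le hK hKne (-a))

lemma width_sub_le (hK : IsCompact K) (hKne : K.Nonempty) (a b : ℤ × ℤ) :
    width K (a - b) ≤ width K a + width K b := by
  simpa [sub_eq_add_neg, width_neg hK hKne] using width_add_le hK hKne a (-b)

lemma width_nsmul (hK : IsCompact K) (hKne : K.Nonempty) (n : ℕ) (a : ℤ × ℤ) :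
    width K (n • a) = n * width K a := by
  apply le_antisymm
  · obtain ⟨p, hp, q, hq, he⟩ := exists_width_eq hK hKne (n • a)
    rw [he, ev_nsmul, ev_nsmul, ← mul_sub]
    exact mul_le_mul_of_nonneg_left (ev_sub_le_width hK a hp hq) n.cast_nonneg
  · obtain ⟨p, hp, q, hq, he⟩ := exists_width_eq hK hKne a
    rw [he, mul_sub, ← ev_nsmul, ← ev_nsmul]
    exact ev_sub_le_width hK _ hp hq

lemma latticeWidth_nonneg (hK : IsCompact K) (hKne : K.Nonempty) : 0 ≤ latticeWidth K :=
  le_csInf ⟨_, (1, 0), by simp, rfl⟩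
    (Set.forall_mem_image.2 fun g _ => width_nonneg hK hKne g)

lemma latticeWidth_le_width (hK : IsCompact K) (hKne : K.Nonempty) {h : ℤ × ℤ} (h0 : h ≠ 0) :
    latticeWidth K ≤ width K h :=
  csInf_le ⟨0, Set.forall_mem_image.2 fun g _ => width_nonneg hK hKne g⟩ ⟨h, h0, rfl⟩

lemma injOn_modThree_of_latticeWidth_pos (hK : IsCompact K) (hKne : K.Nonempty)
    (hpos : 0 < latticeWidth K) :
    Set.InjOn modThree {h | width K h = latticeWidth K} := by
  intro a (ha : width K a = _) b (hb : width K b = _) hab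
  obtain ⟨z, hz⟩ := exists_eq_three_smul_of_modThree_eq_zero (g := a - b) (by
    rw [map_sub, hab, sub_self])
  by_contra hne
  have hz0 : z ≠ 0 := by
    rintro rfl
    exact hne (sub_eq_zero.1 (by simpa using hz))
  have : 3 * latticeWidth K ≤ 2 * latticeWidth K := calc
    3 * latticeWidth K ≤ 3 * width K z := by
      gcongr; exact latticeWidth_le_width hK hKne hz0
    _ = width K (a - b) := by rw [hz, width_nsmul hK hKne]; norm_num
    _ ≤ width K a + width K b := width_sub_le hK hKne a b
    _ = 2 * latticeWidth K := by rw [ha, hb]; ring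
  linarith

lemma eq_or_eq_neg_of_width_eq_zero (hK : IsCompact K) {p q : ℝ × ℝ} (hp : p ∈ K) (hq : q ∈ K)
    (hpl : IsLat p) (hql : IsLat q) (hpq : p ≠ q) {g h : ℤ × ℤ}
    (hg : IsPrimitive g) (hh : IsPrimitive h) (hg0 : width K g = 0) (hh0 : width K h = 0) :
    h = g ∨ h = -g := by
  obtain ⟨⟨p₁, hp₁⟩, ⟨p₂, hp₂⟩⟩ := hpl
  obtain ⟨⟨q₁, hq₁⟩, ⟨q₂, hq₂⟩⟩ := hql
  have hv : (q₁ - p₁, q₂ - p₂) ≠ 0 := fun hv =>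
    hpq (Prod.ext (by simp_all [sub_eq_zero]) (by simp_all [sub_eq_zero]))
  have horth : ∀ f : ℤ × ℤ, width K f = 0 → f.1 * (q₁ - p₁) + f.2 * (q₂ - p₂) = 0 := by
    intro f hf
    have := ev_eq_of_width_eq_zero hK hf hp hq
    rw [ev, ev, hp₁, hp₂, hq₁, hq₂] at this
    have hcast : ((f.1 * (q₁ - p₁) + f.2 * (q₂ - p₂) : ℤ) : ℝ) = 0 := by
      push_cast; linear_combination -this
    exact_mod_cast hcast
  exact hg.eq_or_eq_neg_of_orthogonal hh hv (horth g hg0) (horth h hh0)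

end Width

theorem stmt_7_general (S : Set (ℝ × ℝ)) (hfin : S.Finite)
    (hlat : ∀ p ∈ S, IsLat p)
    (htwo : ∃ p ∈ S, ∃ q ∈ S, p ≠ q) :
    ∃ T : Finset (ℤ × ℤ), T.card ≤ 4 ∧
      ∀ h : ℤ × ℤ, IsPrimitive h →
        width (convexHull ℝ S) h = latticeWidth (convexHull ℝ S) →
        h ∈ T ∨ -h ∈ T := by
  obtain ⟨p, hp, q, hq, hpq⟩ := htwo
  set K := convexHull ℝ S
  have hK : IsCompact K := hfin.isCompact_convexHull ℝ
  have hKne : K.Nonempty := ⟨p, subset_convexHull ℝ S hp⟩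
  rcases (latticeWidth_nonneg hK hKne).lt_or_eq with hpos | hzero
  · obtain ⟨T, hT, hA⟩ := exists_card_le_four_of_injOn_modThree
      (fun h (hh : width K h = _) => (width_neg hK hKne h).trans hh)
      (injOn_modThree_of_latticeWidth_pos hK hKne hpos)
    exact ⟨T, hT, fun h hh hw => hA h hw hh⟩
  by_cases hex : ∃ g, IsPrimitive g ∧ width K g = latticeWidth K
  · obtain ⟨g, hg, hgw⟩ := hex
    refine ⟨{g}, by simp, fun h hh hhw => ?_⟩
    rcases eq_or_eq_neg_of_width_eq_zero hK (subset_convexHull ℝ S hp) (subset_convexHull ℝ S hq)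
      (hlat p hp) (hlat q hq) hpq hg hh (hgw.trans hzero.symm) (hhw.trans hzero.symm) with rfl | rfl
    · simp
    · simp
  · exact ⟨∅, by simp, fun h hh hhw => (hex ⟨h, hh, hhw⟩).elim⟩

/-- a convex lattice polygon with more than one point has at most 4
primitive optimal directions counted up to sign. -/
theorem stmt_7 (S : Set (ℝ × ℝ)) (hfin : S.Finite) (hne : S.Nonempty)
    (hlat : ∀ p ∈ S, IsLat p)
    (htwo : ∃ p ∈ S, ∃ q ∈ S, p ≠ q) :
    ∃ T : Finset (ℤ × ℤ), T.card ≤ 4 ∧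
      ∀ h : ℤ × ℤ, IsPrimitive h →
        width (convexHull ℝ S) h = latticeWidth (convexHull ℝ S) →
        h ∈ T ∨ -h ∈ T :=
  stmt_7_general S hfin hlat htwo
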